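/- Fix γ > 0. The function ℓ ↦ ν₊(A(ℓ, η₁*(ℓ;γ); γ)) is nondecreasing on ℓ > 1, strictly increasing on ℓ ≥ ℓ₁⁺(γ), and satisfies ν₊(A(ℓ, η₁*(ℓ;γ); γ)) ≤ 1 + sqrt(γ/(γ+1)) for every ℓ > 1. -/

import Mathlib

open Real Matrix

/-- Cosine `c(ℓ;γ)` from spiked covariance asymptotics. -/
noncomputable def cP (γ ℓ : ℝ) : ℝ :=
  if 1 + Real.sqrt γ < ℓ then Real.sqrt ((1 - γ / (ℓ - 1) ^ 2) / (1 + γ / (ℓ - 1))) else 0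

/-- Sine `s(ℓ;γ) = sqrt(1 - c²)`. -/
noncomputable def sP (γ ℓ : ℝ) : ℝ := Real.sqrt (1 - (cP γ ℓ) ^ 2)

/-- The 2×2 block `A(ℓ,η;γ)` of the asymptotic pivot. -/
noncomputable def Amat (γ ℓ η : ℝ) : Matrix (Fin 2) (Fin 2) ℝ :=
  !![(η * (cP γ ℓ) ^ 2 + (sP γ ℓ) ^ 2) / ℓ, (η - 1) * cP γ ℓ * sP γ ℓ / Real.sqrt ℓ;
     (η - 1) * cP γ ℓ * sP γ ℓ / Real.sqrt ℓ, (cP γ ℓ) ^ 2 + η * (sP γ ℓ) ^ 2]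

/-- Largest eigenvalue `ν₊(A(ℓ,η;γ))` (supremum of the real spectrum). -/
noncomputable def nuP (γ ℓ η : ℝ) : ℝ := sSup (spectrum ℝ (Amat γ ℓ η))

/-- Smallest eigenvalue `ν₋(A(ℓ,η;γ))` (infimum of the real spectrum). -/
noncomputable def nuM (γ ℓ η : ℝ) : ℝ := sInf (spectrum ℝ (Amat γ ℓ η))

/-- Threshold `ℓ₁⁺(γ) = 1 + (γ + sqrt(γ² + 8γ))/2`. -/
noncomputable def ellOnePlus (γ : ℝ) : ℝ := 1 + (γ + Real.sqrt (γ ^ 2 + 8 * γ)) / 2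

/-- Optimal single-spike shrinker `η₁*(ℓ;γ)`. -/
noncomputable def eta1star (γ ℓ : ℝ) : ℝ :=
  if ellOnePlus γ < ℓ then ℓ / (1 + γ + 2 * γ / (ℓ - 1)) else 1

/-- Optimal single-spike loss `κ₁*(ℓ;γ)`. -/
noncomputable def kappa1star (γ ℓ : ℝ) : ℝ :=
  nuP γ ℓ (eta1star γ ℓ) / nuM γ ℓ (eta1star γ ℓ)

/-- `a(ℓ;γ) = c²/ℓ + s²`. -/
noncomputable def aP (γ ℓ : ℝ) : ℝ := (cP γ ℓ) ^ 2 / ℓ + (sP γ ℓ) ^ 2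

/-- `b(ℓ;γ) = s²/ℓ + c²`. -/
noncomputable def bP (γ ℓ : ℝ) : ℝ := (sP γ ℓ) ^ 2 / ℓ + (cP γ ℓ) ^ 2

/-- Multi-spike condition-number objective `K_r((ℓᵢ),(ηᵢ);γ)`. -/
noncomputable def Kr (γ : ℝ) {r : ℕ} (ℓ η : Fin r → ℝ) : ℝ :=
  max 1 (⨆ i, nuP γ (ℓ i) (η i)) / min 1 (⨅ i, nuM γ (ℓ i) (η i))


section Stmt7Aux

variable {γ ℓ ℓ' : ℝ}

private lemma det_char' (a b c x : ℝ) :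
    (algebraMap ℝ (Matrix (Fin 2) (Fin 2) ℝ) x - !![a,b;b,c]).det = (x-a)*(x-c) - b*b := by
  have : algebraMap ℝ (Matrix (Fin 2) (Fin 2) ℝ) x = !![x,0;0,x] := by
    rw [Matrix.algebraMap_eq_diagonal]
    ext i j
    fin_cases i <;> fin_cases j <;> simp [Matrix.diagonal]
  rw [this]; simp [Matrix.det_fin_two]

private lemma sSup_spectrum_fin2 (a b c : ℝ) :
    sSup (spectrum ℝ !![a, b; b, c]) = (a + c) / 2 + Real.sqrt (((a - c) / 2) ^ 2 + b ^ 2) := by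
  have hΔ : (0:ℝ) ≤ ((a - c) / 2) ^ 2 + b ^ 2 := by positivity
  set r := Real.sqrt (((a - c) / 2) ^ 2 + b ^ 2) with hr
  have hr2 : r ^ 2 = ((a - c) / 2) ^ 2 + b ^ 2 := Real.sq_sqrt hΔ
  have hr0 : 0 ≤ r := Real.sqrt_nonneg _
  have hspec : spectrum ℝ !![a, b; b, c] = {(a + c)/2 - r, (a + c)/2 + r} := by
    ext x
    rw [spectrum.mem_iff, Matrix.isUnit_iff_isUnit_det, isUnit_iff_ne_zero, not_not, det_char']
    simp only [Set.mem_insert_iff, Set.mem_singleton_iff]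
    constructor
    · intro h
      have h2 : (x - ((a+c)/2 - r)) * (x - ((a+c)/2 + r)) = 0 := by nlinarith [hr2]
      rcases mul_eq_zero.1 h2 with h3 | h3
      · left; linarith
      · right; linarith
    · rintro (h | h) <;> subst h <;> nlinarith [hr2]
  rw [hspec, csSup_pair]
  exact sup_eq_right.2 (by linarith)

private lemma cP_sq_le_one (γ ℓ : ℝ) (hγ : 0 < γ) : cP γ ℓ ^ 2 ≤ 1 := by
  unfold cP
  split_ifs with h
  · have hd : 0 < ℓ - 1 := by nlinarith [Real.sqrt_nonneg γ]
    have hden : 0 < 1 + γ / (ℓ - 1) := by positivity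
    have hX : (1 - γ / (ℓ - 1) ^ 2) / (1 + γ / (ℓ - 1)) ≤ 1 := by
      rw [div_le_one hden]
      have : 0 < γ / (ℓ-1)^2 := by positivity
      have : 0 < γ / (ℓ-1) := by positivity
      linarith
    have h0 : Real.sqrt ((1 - γ / (ℓ - 1) ^ 2) / (1 + γ / (ℓ - 1))) ≤ 1 :=
      Real.sqrt_le_one.mpr hX
    nlinarith [Real.sqrt_nonneg ((1 - γ / (ℓ - 1) ^ 2) / (1 + γ / (ℓ - 1)))]
  · norm_num

private lemma sP_sq (γ ℓ : ℝ) (hγ : 0 < γ) : sP γ ℓ ^ 2 = 1 - cP γ ℓ ^ 2 :=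
  Real.sq_sqrt (by linarith [cP_sq_le_one γ ℓ hγ])

private lemma cP_sq_of_gt (γ ℓ : ℝ) (hγ : 0 < γ) (h : 1 + Real.sqrt γ < ℓ) :
    cP γ ℓ ^ 2 = ((ℓ-1)^2 - γ) / ((ℓ-1) * (ℓ-1+γ)) := by
  have hsg : Real.sqrt γ < ℓ - 1 := by linarith
  have hd : 0 < ℓ - 1 := lt_of_le_of_lt (Real.sqrt_nonneg γ) hsg
  have hg2 : γ < (ℓ-1)^2 := by nlinarith [Real.sq_sqrt hγ.le, Real.sqrt_nonneg γ]
  have hX : 0 ≤ (1 - γ / (ℓ - 1) ^ 2) / (1 + γ / (ℓ - 1)) := by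
    apply div_nonneg
    · rw [sub_nonneg, div_le_one (by positivity)]; linarith
    · positivity
  rw [cP, if_pos h, Real.sq_sqrt hX]
  field_simp

private lemma sP_sq_of_gt (γ ℓ : ℝ) (hγ : 0 < γ) (h : 1 + Real.sqrt γ < ℓ) :
    sP γ ℓ ^ 2 = γ * ℓ / ((ℓ-1) * (ℓ-1+γ)) := by
  have hsg : Real.sqrt γ < ℓ - 1 := by linarith
  have hd : 0 < ℓ - 1 := lt_of_le_of_lt (Real.sqrt_nonneg γ) hsg
  have hM : 0 < ℓ - 1 + γ := by linarith
  rw [sP_sq γ ℓ hγ, cP_sq_of_gt γ ℓ hγ h]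
  field_simp
  ring

private lemma ellOnePlus_gt (γ : ℝ) (hγ : 0 < γ) : 1 + Real.sqrt γ < ellOnePlus γ := by
  unfold ellOnePlus
  have h4 : Real.sqrt (4*γ) < Real.sqrt (γ^2 + 8*γ) := by
    apply Real.sqrt_lt_sqrt (by positivity)
    nlinarith
  have h2 : Real.sqrt (4*γ) = 2 * Real.sqrt γ := by
    rw [show (4:ℝ)*γ = 2^2*γ by ring, Real.sqrt_mul (by positivity), Real.sqrt_sq (by norm_num)]
  nlinarith [Real.sqrt_nonneg γ]

private lemma crit_gt (γ ℓ : ℝ) (hγ : 0 < γ) (h : ellOnePlus γ < ℓ) :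
    γ * (ℓ-1) + 2*γ < (ℓ-1)^2 := by
  unfold ellOnePlus at h
  have hs : Real.sqrt (γ^2+8*γ) < 2*(ℓ-1) - γ := by linarith
  nlinarith [Real.sq_sqrt (show (0:ℝ) ≤ γ^2+8*γ by positivity), Real.sqrt_nonneg (γ^2+8*γ)]

private lemma crit_eq (γ : ℝ) (hγ : 0 < γ) :
    (ellOnePlus γ - 1)^2 = γ * (ellOnePlus γ - 1) + 2*γ := by
  unfold ellOnePlus
  have := Real.sq_sqrt (show (0:ℝ) ≤ γ^2+8*γ by positivity)
  nlinarith [Real.sqrt_nonneg (γ^2+8*γ)]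

private lemma ellOnePlus_gt_one (γ : ℝ) (hγ : 0 < γ) : 1 < ellOnePlus γ :=
  lt_trans (by nlinarith [Real.sqrt_pos.2 hγ]) (ellOnePlus_gt γ hγ)

private lemma nuP_at_one (γ ℓ : ℝ) (hγ : 0 < γ) (hℓ : 1 < ℓ) : nuP γ ℓ 1 = 1 := by
  have hcs : cP γ ℓ ^ 2 + sP γ ℓ ^ 2 = 1 := by rw [sP_sq γ ℓ hγ]; ring
  unfold nuP Amat
  rw [sSup_spectrum_fin2]
  have hb : (1 - 1) * cP γ ℓ * sP γ ℓ / Real.sqrt ℓ = 0 := by norm_num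
  rw [hb, one_mul, one_mul, hcs]
  have h1 : (1/ℓ - 1)/2 ≤ 0 := by
    have : 1/ℓ < 1 := by rw [div_lt_one (by linarith)]; linarith
    linarith
  rw [show (0:ℝ)^2 = 0 by norm_num, add_zero, Real.sqrt_sq_eq_abs, abs_of_nonpos h1]
  field_simp
  ring

private lemma nuP_formula (γ ℓ : ℝ) (hγ : 0 < γ) (h : ellOnePlus γ < ℓ) :
    nuP γ ℓ (eta1star γ ℓ) = (ℓ-1)/(ℓ-1+γ) +
      Real.sqrt ((ℓ-1)^2/(ℓ-1+γ)^2 - (ℓ-1)/((ℓ-1)*(1+γ)+2*γ)) := by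
  have hsg : 1 + Real.sqrt γ < ℓ := lt_trans (ellOnePlus_gt γ hγ) h
  have hd : 0 < ℓ - 1 := by nlinarith [Real.sqrt_nonneg γ]
  have hl0 : 0 < ℓ := by linarith
  have hM : 0 < ℓ - 1 + γ := by linarith
  have hE : 0 < (ℓ-1)*(1+γ) + 2*γ := by nlinarith
  have hη : eta1star γ ℓ = ℓ * (ℓ-1) / ((ℓ-1)*(1+γ) + 2*γ) := by
    rw [eta1star, if_pos h]
    rw [div_eq_div_iff (by positivity) hE.ne']
    field_simp
  have hc2 := cP_sq_of_gt γ ℓ hγ hsg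
  have hs2 := sP_sq_of_gt γ ℓ hγ hsg
  unfold nuP Amat
  rw [sSup_spectrum_fin2]
  set η := eta1star γ ℓ
  set c := cP γ ℓ
  set s := sP γ ℓ
  have hb2 : ((η - 1) * c * s / Real.sqrt ℓ)^2 = (η-1)^2 * c^2 * s^2 / ℓ := by
    rw [div_pow, Real.sq_sqrt hl0.le]; ring
  have e1 : (η * c ^ 2 + s ^ 2) / ℓ + (c ^ 2 + η * s ^ 2) = 2*(ℓ-1)/(ℓ-1+γ) := by
    rw [hη, hc2, hs2]
    field_simp
    ring
  have e2 : (((η * c ^ 2 + s ^ 2) / ℓ - (c ^ 2 + η * s ^ 2)) / 2) ^ 2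
      + ((η - 1) * c * s / Real.sqrt ℓ) ^ 2
      = (ℓ-1)^2/(ℓ-1+γ)^2 - (ℓ-1)/((ℓ-1)*(1+γ)+2*γ) := by
    rw [hb2, hη, hc2, hs2]
    field_simp
    ring
  rw [e1, e2]
  ring_nf

private lemma lt_root (T D x : ℝ) (h : x^2 - T*x + D < 0) :
    x < T/2 + Real.sqrt (T^2/4 - D) := by
  have h1 : (x - T/2)^2 < T^2/4 - D := by nlinarith
  have h3 : |x - T/2| < Real.sqrt (T^2/4 - D) := by
    rw [← Real.sqrt_sq_eq_abs]
    exact Real.sqrt_lt_sqrt (sq_nonneg _) h1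
  have := le_abs_self (x - T/2)
  linarith

private lemma nuP_flat (γ ℓ : ℝ) (hγ : 0 < γ) (h1 : 1 < ℓ) (h2 : ¬ ellOnePlus γ < ℓ) :
    nuP γ ℓ (eta1star γ ℓ) = 1 := by
  have : eta1star γ ℓ = 1 := by rw [eta1star, if_neg h2]
  rw [this, nuP_at_one γ ℓ hγ h1]

private lemma nu_facts (γ ℓ : ℝ) (hγ : 0 < γ) (h : ellOnePlus γ ≤ ℓ) :
    1 ≤ nuP γ ℓ (eta1star γ ℓ) ∧
    nuP γ ℓ (eta1star γ ℓ)^2 - (2*(ℓ-1)/(ℓ-1+γ)) * nuP γ ℓ (eta1star γ ℓ)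
      + (ℓ-1)/((ℓ-1)*(1+γ)+2*γ) ≤ 0 := by
  have hℓ1 : 1 < ℓ := lt_of_lt_of_le (ellOnePlus_gt_one γ hγ) h
  have hd : 0 < ℓ - 1 := by linarith
  have hM : 0 < ℓ - 1 + γ := by linarith
  have hE : 0 < (ℓ-1)*(1+γ) + 2*γ := by nlinarith
  rcases eq_or_lt_of_le h with heq | hlt
  · have hflat : nuP γ ℓ (eta1star γ ℓ) = 1 := by
      apply nuP_flat γ ℓ hγ hℓ1
      rw [← heq]; exact lt_irrefl _
    rw [hflat]
    have hcrit : (ℓ-1)^2 = γ*(ℓ-1)+2*γ := by rw [← heq]; exact crit_eq γ hγ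
    refine ⟨le_refl 1, ?_⟩
    have : 1^2 - 2*(ℓ-1)/(ℓ-1+γ)*1 + (ℓ-1)/((ℓ-1)*(1+γ)+2*γ) = 0 := by
      field_simp
      nlinarith [hcrit]
    linarith
  · rw [nuP_formula γ ℓ hγ hlt]
    have h2 := crit_gt γ ℓ hγ hlt
    have harg : 0 ≤ (ℓ-1)^2/(ℓ-1+γ)^2 - (ℓ-1)/((ℓ-1)*(1+γ)+2*γ) := by
      rw [sub_nonneg, div_le_div_iff₀ hE (by positivity)]
      nlinarith [mul_pos (mul_pos hγ hd) (show 0 < (ℓ-1)^2 - γ by nlinarith)]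
    have hr2 := Real.sq_sqrt harg
    have hr0 := Real.sqrt_nonneg ((ℓ-1)^2/(ℓ-1+γ)^2 - (ℓ-1)/((ℓ-1)*(1+γ)+2*γ))
    constructor
    · have hg : γ/(ℓ-1+γ) ≤ Real.sqrt ((ℓ-1)^2/(ℓ-1+γ)^2 - (ℓ-1)/((ℓ-1)*(1+γ)+2*γ)) := by
        have e : γ/(ℓ-1+γ) = Real.sqrt ((γ/(ℓ-1+γ))^2) := (Real.sqrt_sq (by positivity)).symm
        rw [e]
        apply Real.sqrt_le_sqrt
        rw [div_pow, div_sub_div _ _ (by positivity) hE.ne',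
          div_le_div_iff₀ (by positivity) (by positivity)]
        have key : γ^2*((ℓ-1)*(1+γ)+2*γ) ≤ (ℓ-1)^2*((ℓ-1)*(1+γ)+2*γ) - (ℓ-1)*(ℓ-1+γ)^2 := by
          nlinarith [mul_pos (mul_pos hγ hM) (show 0 < (ℓ-1)^2 - γ*(ℓ-1) - 2*γ by nlinarith)]
        nlinarith [mul_le_mul_of_nonneg_right key (sq_nonneg ((ℓ:ℝ)-1+γ))]
      have : (ℓ-1)/(ℓ-1+γ) + γ/(ℓ-1+γ) = 1 := by field_simp
      linarith
    · have heq : ((ℓ-1)/(ℓ-1+γ) + Real.sqrt ((ℓ-1)^2/(ℓ-1+γ)^2 - (ℓ-1)/((ℓ-1)*(1+γ)+2*γ)))^2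
          - 2*(ℓ-1)/(ℓ-1+γ) * ((ℓ-1)/(ℓ-1+γ)
            + Real.sqrt ((ℓ-1)^2/(ℓ-1+γ)^2 - (ℓ-1)/((ℓ-1)*(1+γ)+2*γ)))
          + (ℓ-1)/((ℓ-1)*(1+γ)+2*γ) = 0 := by
        have hr2' : Real.sqrt ((ℓ-1)^2/(ℓ-1+γ)^2 - (ℓ-1)/((ℓ-1)*(1+γ)+2*γ))^2
            = ((ℓ-1)/(ℓ-1+γ))^2 - (ℓ-1)/((ℓ-1)*(1+γ)+2*γ) := by
          rw [hr2, div_pow]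
        linear_combination hr2'
      linarith

private lemma mono_strict (γ ℓ ℓ' : ℝ) (hγ : 0 < γ) (h : ellOnePlus γ ≤ ℓ) (hlt : ℓ < ℓ') :
    nuP γ ℓ (eta1star γ ℓ) < nuP γ ℓ' (eta1star γ ℓ') := by
  obtain ⟨hν1, hp⟩ := nu_facts γ ℓ hγ h
  have h' : ellOnePlus γ < ℓ' := lt_of_le_of_lt h hlt
  have hℓ1 : 1 < ℓ := lt_of_lt_of_le (ellOnePlus_gt_one γ hγ) h
  have hd : 0 < ℓ - 1 := by linarith
  have hd' : 0 < ℓ' - 1 := by linarith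
  have hM : 0 < ℓ - 1 + γ := by linarith
  have hM' : 0 < ℓ' - 1 + γ := by linarith
  have hE : 0 < (ℓ-1)*(1+γ) + 2*γ := by nlinarith
  have hE' : 0 < (ℓ'-1)*(1+γ) + 2*γ := by nlinarith
  set ν := nuP γ ℓ (eta1star γ ℓ) with hν
  set T := 2*(ℓ-1)/(ℓ-1+γ) with hT
  set D := (ℓ-1)/((ℓ-1)*(1+γ)+2*γ) with hD
  set T' := 2*(ℓ'-1)/(ℓ'-1+γ) with hT'
  set D' := (ℓ'-1)/((ℓ'-1)*(1+γ)+2*γ) with hD'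
  have eT : T' - T = 2*γ*(ℓ'-ℓ)/((ℓ-1+γ)*(ℓ'-1+γ)) := by
    rw [hT, hT']; field_simp; ring
  have eD : D' - D = 2*γ*(ℓ'-ℓ)/(((ℓ-1)*(1+γ)+2*γ)*((ℓ'-1)*(1+γ)+2*γ)) := by
    rw [hD, hD']; field_simp; ring
  have hME : (ℓ-1+γ)*(ℓ'-1+γ) < ((ℓ-1)*(1+γ)+2*γ)*((ℓ'-1)*(1+γ)+2*γ) := by
    have e1 : ℓ-1+γ < (ℓ-1)*(1+γ)+2*γ := by nlinarith
    have e2 : ℓ'-1+γ < (ℓ'-1)*(1+γ)+2*γ := by nlinarith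
    nlinarith [hM, hM']
  have hDT : D' - D < T' - T := by
    rw [eT, eD]
    apply div_lt_div_of_pos_left (show (0:ℝ) < 2*γ*(ℓ'-ℓ) by nlinarith) (by positivity) hME
  have hTT : 0 < T' - T := by
    rw [eT]; exact div_pos (by nlinarith) (by positivity)
  have hpν' : ν^2 - T'*ν + D' < 0 := by
    nlinarith [hp, hν1, hTT, hDT, mul_nonneg (sub_nonneg.2 hTT.le) (sub_nonneg.2 hν1)]
  have hroot := lt_root T' D' ν hpν'
  rw [nuP_formula γ ℓ' hγ h']
  have eA : (ℓ'-1)/(ℓ'-1+γ) = T'/2 := by rw [hT']; ring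
  have eB : (ℓ'-1)^2/(ℓ'-1+γ)^2 = T'^2/4 := by
    rw [hT']; field_simp; ring
  rw [eA, eB]
  exact hroot

private lemma nuP_upper (γ ℓ : ℝ) (hγ : 0 < γ) (hlt : ellOnePlus γ < ℓ) :
    nuP γ ℓ (eta1star γ ℓ) ≤ 1 + Real.sqrt (γ/(γ+1)) := by
  have hℓ1 : 1 < ℓ := lt_trans (ellOnePlus_gt_one γ hγ) hlt
  have hd : 0 < ℓ - 1 := by linarith
  have hM : 0 < ℓ - 1 + γ := by linarith
  have hE : 0 < (ℓ-1)*(1+γ) + 2*γ := by nlinarith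
  have h2 := crit_gt γ ℓ hγ hlt
  rw [nuP_formula γ ℓ hγ hlt]
  have hA : (ℓ-1)/(ℓ-1+γ) ≤ 1 := by
    rw [div_le_one hM]; linarith
  have hB : Real.sqrt ((ℓ-1)^2/(ℓ-1+γ)^2 - (ℓ-1)/((ℓ-1)*(1+γ)+2*γ))
      ≤ Real.sqrt (γ/(γ+1)) := by
    apply Real.sqrt_le_sqrt
    rw [div_sub_div _ _ (by positivity) hE.ne', div_le_div_iff₀ (by positivity) (by positivity)]
    have hg2 : γ < (ℓ-1)^2 := by nlinarith
    have s1 : (ℓ-1)*((ℓ-1)^2-γ)*(γ+1) ≤ (ℓ-1)^2*((ℓ-1)*(γ+1)) := by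
      nlinarith [mul_pos (mul_pos hd hγ) (show (0:ℝ) < γ+1 by linarith)]
    have s2 : (ℓ-1)^2*((ℓ-1)*(γ+1)) ≤ (ℓ-1+γ)^2*((ℓ-1)*(1+γ)+2*γ) :=
      mul_le_mul (by nlinarith) (by nlinarith) (by positivity) (by positivity)
    have key : (ℓ-1)*((ℓ-1)^2-γ)*(γ+1) ≤ (ℓ-1+γ)^2*((ℓ-1)*(1+γ)+2*γ) := le_trans s1 s2
    nlinarith [mul_le_mul_of_nonneg_left key hγ.le]
  linarith

end Stmt7Aux

/-- `ℓ ↦ ν₊(A(ℓ,η₁*(ℓ;γ);γ))` is nondecreasing on `ℓ > 1`,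
strictly increasing on `ℓ ≥ ℓ₁⁺(γ)`, and bounded by `1 + sqrt(γ/(γ+1))`. -/
theorem stmt7 (γ : ℝ) (hγ : 0 < γ) :
    (∀ ℓ ℓ' : ℝ, 1 < ℓ → ℓ ≤ ℓ' →
      nuP γ ℓ (eta1star γ ℓ) ≤ nuP γ ℓ' (eta1star γ ℓ')) ∧
    (∀ ℓ ℓ' : ℝ, ellOnePlus γ ≤ ℓ → ℓ < ℓ' →
      nuP γ ℓ (eta1star γ ℓ) < nuP γ ℓ' (eta1star γ ℓ')) ∧
    (∀ ℓ : ℝ, 1 < ℓ →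
      nuP γ ℓ (eta1star γ ℓ) ≤ 1 + Real.sqrt (γ / (γ + 1))) := by
  refine ⟨?_, ?_, ?_⟩
  · intro ℓ ℓ' hℓ hle
    have hℓ' : 1 < ℓ' := lt_of_lt_of_le hℓ hle
    by_cases h2 : ellOnePlus γ < ℓ'
    · by_cases h1 : ellOnePlus γ < ℓ
      · rcases eq_or_lt_of_le hle with rfl | hlt
        · exact le_refl _
        · exact (mono_strict γ ℓ ℓ' hγ h1.le hlt).le
      · rw [nuP_flat γ ℓ hγ hℓ h1]
        have := mono_strict γ (ellOnePlus γ) ℓ' hγ (le_refl _) h2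
        rw [nuP_flat γ (ellOnePlus γ) hγ (ellOnePlus_gt_one γ hγ) (lt_irrefl _)] at this
        linarith
    · have h1 : ¬ ellOnePlus γ < ℓ := fun hc => h2 (lt_of_lt_of_le hc hle)
      rw [nuP_flat γ ℓ hγ hℓ h1, nuP_flat γ ℓ' hγ hℓ' h2]
  · intro ℓ ℓ' h hlt
    exact mono_strict γ ℓ ℓ' hγ h hlt
  · intro ℓ hℓ
    by_cases h1 : ellOnePlus γ < ℓ
    · exact nuP_upper γ ℓ hγ h1
    · rw [nuP_flat γ ℓ hγ hℓ h1]
      have := Real.sqrt_nonneg (γ/(γ+1))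
      linarith
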